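/- arXiv:1412.7426 — 6 statements merged into one kernel-verified Lean document; each statement's English description precedes it below -/
import Mathlib

section
/- (Agmon's inequality on (0,1).) For every continuously differentiable function u : [0,1] → ℝ with u(0) = u(1) = 0 one has sup_{ξ∈[0,1]} u(ξ)² ≤ ‖u‖_{L²} ‖u'‖_{L²}. -/
/-!
Since `u` vanishes at both ends, `u ξ ^ 2` is the integral of `(u ^ 2)' = 2 u u'` over `[0, ξ]`
and minus its integral over `[ξ, 1]`; adding the two resulting bounds gives
`u ξ ^ 2 ≤ ∫₀¹ |u| |u'|`, and Cauchy–Schwarz (Hölder with `p = q = 2`) bounds the right-hand side.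
-/

open MeasureTheory Set intervalIntegral

theorem integral_abs_mul_abs_le_sqrt_mul_sqrt {α : Type*} [MeasurableSpace α] {μ : Measure α}
    {f g : α → ℝ} (hf : MemLp f 2 μ) (hg : MemLp g 2 μ) :
    ∫ x, |f x| * |g x| ∂μ ≤ √(∫ x, f x ^ 2 ∂μ) * √(∫ x, g x ^ 2 ∂μ) := by
  have hf' : MemLp f (ENNReal.ofReal 2) μ := by simpa using hf
  have hg' : MemLp g (ENNReal.ofReal 2) μ := by simpa using hg
  simpa [Real.sqrt_eq_rpow] using
    integral_mul_norm_le_Lp_mul_Lq Real.HolderConjugate.two_two hf' hg'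

theorem ContinuousOn.memLp_two_restrict_Ioc {f : ℝ → ℝ} {a b : ℝ}
    (hf : ContinuousOn f (Icc a b)) : MemLp f 2 (volume.restrict (Ioc a b)) :=
  (memLp_two_iff_integrable_sq
      ((hf.mono Ioc_subset_Icc_self).aestronglyMeasurable measurableSet_Ioc)).2
    ((hf.pow 2).integrableOn_Icc.mono_set Ioc_subset_Icc_self)

theorem abs_sub_le_integral_abs_deriv {f f' : ℝ → ℝ} {a b : ℝ} (hab : a ≤ b)
    (hderiv : ∀ x ∈ Icc a b, HasDerivWithinAt f (f' x) (Icc a b) x)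
    (hint : IntervalIntegrable f' volume a b) :
    |f b - f a| ≤ ∫ x in a..b, |f' x| := by
  have hderiv_Ioo : ∀ x ∈ Ioo a b, HasDerivWithinAt f (f' x) (Ioi x) x := fun x hx =>
    ((hderiv x (Ioo_subset_Icc_self hx)).hasDerivAt (Icc_mem_nhds hx.1 hx.2)).hasDerivWithinAt
  rw [← integral_eq_sub_of_hasDeriv_right_of_le hab (HasDerivWithinAt.continuousOn hderiv)
    hderiv_Ioo hint]
  exact abs_integral_le_integral_abs hab

theorem sq_le_integral_abs_mul_abs_deriv {u u' : ℝ → ℝ} {a b ξ : ℝ}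
    (hderiv : ∀ x ∈ Icc a b, HasDerivWithinAt u (u' x) (Icc a b) x)
    (hcont : ContinuousOn u' (Icc a b)) (ha : u a = 0) (hb : u b = 0) (hξ : ξ ∈ Icc a b) :
    u ξ ^ 2 ≤ ∫ x in a..b, |u x| * |u' x| := by
  have ha_mem : a ∈ Icc a b := left_mem_Icc.2 (hξ.1.trans hξ.2)
  have hb_mem : b ∈ Icc a b := right_mem_Icc.2 (hξ.1.trans hξ.2)
  have hsq : ∀ x ∈ Icc a b,
      HasDerivWithinAt (fun x => u x ^ 2) (2 * (u x * u' x)) (Icc a b) x := fun x hx => by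
    simpa [mul_assoc] using (hderiv x hx).fun_pow 2
  have hint : ∀ c ∈ Icc a b, ∀ d ∈ Icc a b,
      IntervalIntegrable (fun x => 2 * (u x * u' x)) volume c d := fun c hc d hd =>
    ((continuousOn_const.mul ((HasDerivWithinAt.continuousOn hderiv).mul hcont)).mono
      (uIcc_subset_Icc hc hd)).intervalIntegrable
  have hleft := abs_sub_le_integral_abs_deriv hξ.1
    (fun x hx => (hsq x ⟨hx.1, hx.2.trans hξ.2⟩).mono (Icc_subset_Icc_right hξ.2))
    (hint a ha_mem ξ hξ)
  have hright := abs_sub_le_integral_abs_deriv hξ.2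
    (fun x hx => (hsq x ⟨hξ.1.trans hx.1, hx.2⟩).mono (Icc_subset_Icc_left hξ.1))
    (hint ξ hξ b hb_mem)
  have hsplit := integral_add_adjacent_intervals (hint a ha_mem ξ hξ).abs (hint ξ hξ b hb_mem).abs
  simp only [abs_mul, abs_two, intervalIntegral.integral_const_mul, ha, hb] at hleft hright hsplit
  linarith [le_abs_self (u ξ ^ 2 - 0 ^ 2), neg_le_abs (0 ^ 2 - u ξ ^ 2)]

/-- **Agmon's inequality on (0,1).** For every continuously differentiable
function `u : [0,1] → ℝ` with `u 0 = u 1 = 0` one has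
`sup_{ξ ∈ [0,1]} u ξ ^ 2 ≤ ‖u‖_{L²} ‖u'‖_{L²}`. -/
theorem agmon_inequality (u u' : ℝ → ℝ)
    (hderiv : ∀ x ∈ Icc (0:ℝ) 1, HasDerivWithinAt u (u' x) (Icc (0:ℝ) 1) x)
    (hcont : ContinuousOn u' (Icc (0:ℝ) 1))
    (h0 : u 0 = 0) (h1 : u 1 = 0) :
    ∀ ξ ∈ Icc (0:ℝ) 1,
      u ξ ^ 2 ≤ Real.sqrt (∫ x in (0:ℝ)..1, u x ^ 2) *
        Real.sqrt (∫ x in (0:ℝ)..1, u' x ^ 2) := by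
  intro ξ hξ
  have hu : ContinuousOn u (Icc 0 1) := HasDerivWithinAt.continuousOn hderiv
  calc u ξ ^ 2 ≤ ∫ x in (0:ℝ)..1, |u x| * |u' x| :=
        sq_le_integral_abs_mul_abs_deriv hderiv hcont h0 h1 hξ
    _ ≤ _ := by
        simpa only [integral_of_le zero_le_one] using
          integral_abs_mul_abs_le_sqrt_mul_sqrt hu.memLp_two_restrict_Ioc
            hcont.memLp_two_restrict_Ioc
end

section
/- (L⁴–L² interpolation on (0,1).) For every continuously differentiable function u : [0,1] → ℝ with u(0) = u(1) = 0 one has ∫₀¹ u(ξ)⁴ dξ ≤ ‖u‖_{L²}³ ‖u'‖_{L²}. -/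
/-!
Writing `u x ^ 2` once as `∫ₐˣ 2uu'` and once as `-∫ₓᵇ 2uu'` (both boundary values vanish)
gives `sup u² ≤ ∫ |u u'|`. Hence `∫ u⁴ ≤ sup u² · ∫ u² ≤ ∫ |u u'| · ∫ u²`, and Cauchy–Schwarz
bounds `∫ |u u'|` by `‖u‖₂ ‖u'‖₂`.
-/

open MeasureTheory Set intervalIntegral

theorem integral_abs_mul_le_sqrt_mul_sqrt {α : Type*} [MeasurableSpace α] {μ : Measure α}
    {f g : α → ℝ} (hf : MemLp f 2 μ) (hg : MemLp g 2 μ) :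
    ∫ x, |f x * g x| ∂μ ≤ √(∫ x, f x ^ 2 ∂μ) * √(∫ x, g x ^ 2 ∂μ) := by
  have holder := integral_mul_le_Lp_mul_Lq_of_nonneg Real.HolderConjugate.two_two
    (.of_forall fun x => abs_nonneg (f x)) (.of_forall fun x => abs_nonneg (g x))
    (by rw [ENNReal.ofReal_ofNat]; exact hf.abs) (by rw [ENNReal.ofReal_ofNat]; exact hg.abs)
  simp only [abs_mul, Real.sqrt_eq_rpow, one_div]
  simpa [Real.rpow_two, sq_abs] using holder

theorem intervalIntegral.integral_abs_mul_le_sqrt_mul_sqrt {f g : ℝ → ℝ} {a b : ℝ}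
    (hab : a ≤ b) (hf : ContinuousOn f (Icc a b)) (hg : ContinuousOn g (Icc a b)) :
    ∫ x in a..b, |f x * g x| ≤ √(∫ x in a..b, f x ^ 2) * √(∫ x in a..b, g x ^ 2) := by
  have memLp {h : ℝ → ℝ} (hh : ContinuousOn h (Icc a b)) :
      MemLp h 2 (volume.restrict (Ioc a b)) :=
    (memLp_two_iff_integrable_sq
      ((hh.mono Ioc_subset_Icc_self).aestronglyMeasurable measurableSet_Ioc)).2
      ((hh.pow 2).integrableOn_Icc.mono_set Ioc_subset_Icc_self)
  simp only [integral_of_le hab]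
  exact _root_.integral_abs_mul_le_sqrt_mul_sqrt (memLp hf) (memLp hg)

section

variable {u u' : ℝ → ℝ} {a b : ℝ}

theorem integral_mul_deriv_eq_sq_sub_sq (hab : a ≤ b)
    (hderiv : ∀ x ∈ Icc a b, HasDerivWithinAt u (u' x) (Icc a b) x)
    (hcont : ContinuousOn u' (Icc a b)) :
    2 * ∫ t in a..b, u t * u' t = u b ^ 2 - u a ^ 2 := by
  have hu : ContinuousOn u (Icc a b) := fun x hx => (hderiv x hx).continuousWithinAt
  rw [← intervalIntegral.integral_const_mul]
  refine integral_eq_sub_of_hasDerivAt_of_le hab (hu.pow 2) (fun x hx => ?_)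
    ((continuousOn_const.mul (hu.mul hcont)).intervalIntegrable_of_Icc hab)
  have hux := (hderiv x (Ioo_subset_Icc_self hx)).hasDerivAt (Icc_mem_nhds hx.1 hx.2)
  exact (hux.fun_pow 2).congr_deriv (by norm_num [mul_assoc])

theorem sq_le_integral_abs_mul_deriv
    (hderiv : ∀ x ∈ Icc a b, HasDerivWithinAt u (u' x) (Icc a b) x)
    (hcont : ContinuousOn u' (Icc a b)) (ha : u a = 0) (hb : u b = 0) {x : ℝ}
    (hx : x ∈ Icc a b) :
    u x ^ 2 ≤ ∫ t in a..b, |u t * u' t| := by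
  have hsub {c d : ℝ} (hc : a ≤ c) (hd : d ≤ b) :
      ∀ y ∈ Icc c d, HasDerivWithinAt u (u' y) (Icc c d) y := fun y hy =>
    (hderiv y ⟨hc.trans hy.1, hy.2.trans hd⟩).mono (Icc_subset_Icc hc hd)
  have left : 2 * ∫ t in a..x, u t * u' t = u x ^ 2 := by
    rw [integral_mul_deriv_eq_sq_sub_sq hx.1 (hsub le_rfl hx.2)
      (hcont.mono (Icc_subset_Icc le_rfl hx.2)), ha]
    ring
  have right : 2 * ∫ t in x..b, u t * u' t = -u x ^ 2 := by
    rw [integral_mul_deriv_eq_sq_sub_sq hx.2 (hsub hx.1 le_rfl)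
      (hcont.mono (Icc_subset_Icc hx.1 le_rfl)), hb]
    ring
  have hu : ContinuousOn u (Icc a b) := fun t ht => (hderiv t ht).continuousWithinAt
  have hint : ContinuousOn (fun t => |u t * u' t|) (Icc a b) := (hu.mul hcont).abs
  have split := integral_add_adjacent_intervals
    ((hint.mono (Icc_subset_Icc le_rfl hx.2)).intervalIntegrable_of_Icc (μ := volume) hx.1)
    ((hint.mono (Icc_subset_Icc hx.1 le_rfl)).intervalIntegrable_of_Icc (μ := volume) hx.2)
  linarith [le_abs_self (∫ t in a..x, u t * u' t), neg_abs_le (∫ t in x..b, u t * u' t),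
    abs_integral_le_integral_abs (f := fun t => u t * u' t) (μ := volume) hx.1,
    abs_integral_le_integral_abs (f := fun t => u t * u' t) (μ := volume) hx.2]

end

theorem integral_pow_four_le_of_sq_le {u : ℝ → ℝ} {a b M : ℝ} (hab : a ≤ b)
    (hu : ContinuousOn u (Icc a b))
    (hM : ∀ x ∈ Icc a b, u x ^ 2 ≤ M) :
    ∫ x in a..b, u x ^ 4 ≤ M * ∫ x in a..b, u x ^ 2 := by
  rw [← intervalIntegral.integral_const_mul]
  refine integral_mono_on hab ((hu.pow 4).intervalIntegrable_of_Icc hab)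
    ((continuousOn_const.mul (hu.pow 2)).intervalIntegrable_of_Icc hab) fun x hx => ?_
  nlinarith [hM x hx, sq_nonneg (u x)]

/-- **L⁴–L² interpolation on (0,1).** For every continuously differentiable
function `u : [0,1] → ℝ` with `u 0 = u 1 = 0` one has
`∫₀¹ u⁴ ≤ ‖u‖_{L²}³ ‖u'‖_{L²}`. -/
theorem L4_L2_interpolation (u u' : ℝ → ℝ)
    (hderiv : ∀ x ∈ Icc (0:ℝ) 1, HasDerivWithinAt u (u' x) (Icc (0:ℝ) 1) x)
    (hcont : ContinuousOn u' (Icc (0:ℝ) 1))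
    (h0 : u 0 = 0) (h1 : u 1 = 0) :
    (∫ x in (0:ℝ)..1, u x ^ 4) ≤
      Real.sqrt (∫ x in (0:ℝ)..1, u x ^ 2) ^ 3 *
        Real.sqrt (∫ x in (0:ℝ)..1, u' x ^ 2) := by
  have hu : ContinuousOn u (Icc (0:ℝ) 1) := fun x hx => (hderiv x hx).continuousWithinAt
  set A := ∫ x in (0:ℝ)..1, u x ^ 2
  set B := ∫ x in (0:ℝ)..1, u' x ^ 2
  have hA : 0 ≤ A := integral_nonneg zero_le_one fun x _ => sq_nonneg _
  calc (∫ x in (0:ℝ)..1, u x ^ 4)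
      ≤ (∫ x in (0:ℝ)..1, |u x * u' x|) * A :=
        integral_pow_four_le_of_sq_le zero_le_one hu
          fun x hx => sq_le_integral_abs_mul_deriv hderiv hcont h0 h1 hx
    _ ≤ (√A * √B) * A := by
        gcongr
        exact integral_abs_mul_le_sqrt_mul_sqrt zero_le_one hu hcont
    _ = √A ^ 3 * √B := by rw [pow_succ, Real.sq_sqrt hA]; ring
end

section
/- (Key trilinear estimate for the Burgers nonlinearity.) There exists a constant C > 0 such that for every continuous u : [0,1] → ℝ, every continuously differentiable v : [0,1] → ℝ with v(0) = v(1) = 0, and every ε > 0, one has |∫₀¹ u(ξ) v(ξ) v'(ξ) dξ| ≤ ε ‖v'‖_{L²}² + C ε^{-5/3} ‖u‖_{L⁴}^{8/3} ‖v‖_{L²}². -/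
open MeasureTheory Set intervalIntegral

/-!
Write `A = ‖v'‖₂²`, `B = ‖u‖₄⁴`, `D = ‖v‖₂²`. Since `v(0) = 0`, `v(x)² = 2∫₀ˣ v v'`, so by
Cauchy–Schwarz `v(x)⁴ ≤ 4 D A` and hence `(∫ v⁴)² ≤ ‖v‖∞⁴ D² ≤ 4 D³ A`. Two more applications of
Cauchy–Schwarz (to `(u v) · v'` and to `u² · v²`) give `(∫ u v v')⁸ ≤ 4 B² D³ A⁵`. With
`x = ε A` and `y = ε^{-5/3} B^{2/3} D` this reads `(∫ u v v')⁸ ≤ 4 x⁵ y³`, and the single binomial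
term `56 x⁵ y³ ≤ (x + y)⁸` finishes the proof with `C = 1`.
-/

theorem sq_integral_mul_le_integral_sq_mul_integral_sq {α : Type*} [MeasurableSpace α]
    {μ : Measure α} {f g : α → ℝ} (hf : MemLp f 2 μ) (hg : MemLp g 2 μ) :
    (∫ x, f x * g x ∂μ) ^ 2 ≤ (∫ x, f x ^ 2 ∂μ) * ∫ x, g x ^ 2 ∂μ := by
  have h := real_inner_mul_inner_self_le (hf.toLp f) (hg.toLp g)
  simp only [L2.inner_def] at h
  have integral_inner_toLp : ∀ {φ ψ : α → ℝ} (hφ : MemLp φ 2 μ) (hψ : MemLp ψ 2 μ),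
      ∫ x, inner ℝ (hφ.toLp φ x) (hψ.toLp ψ x) ∂μ = ∫ x, φ x * ψ x ∂μ := by
    intro φ ψ hφ hψ
    refine integral_congr_ae ?_
    filter_upwards [hφ.coeFn_toLp, hψ.coeFn_toLp] with x h1 h2
    simp [h1, h2, mul_comm]
  rw [integral_inner_toLp, integral_inner_toLp, integral_inner_toLp] at h
  simpa [sq] using h

theorem sq_intervalIntegral_mul_le {f g : ℝ → ℝ} {a b : ℝ} (hab : a ≤ b)
    (hf : ContinuousOn f (Icc a b)) (hg : ContinuousOn g (Icc a b)) :
    (∫ x in a..b, f x * g x) ^ 2 ≤ (∫ x in a..b, f x ^ 2) * ∫ x in a..b, g x ^ 2 := by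
  simp only [integral_of_le hab]
  exact sq_integral_mul_le_integral_sq_mul_integral_sq hf.memLp_two_restrict_Ioc
    hg.memLp_two_restrict_Ioc

theorem intervalIntegral_sq_le_of_mem_Icc {f : ℝ → ℝ} {a b x : ℝ}
    (hf : ContinuousOn f (Icc a b)) (hx : x ∈ Icc a b) :
    ∫ y in a..x, f y ^ 2 ≤ ∫ y in a..b, f y ^ 2 := by
  refine integral_mono_interval le_rfl hx.1 hx.2 (ae_of_all _ fun y => sq_nonneg (f y)) ?_
  exact (hf.pow 2).intervalIntegrable_of_Icc (hx.1.trans hx.2)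

section Agmon

variable {v v' : ℝ → ℝ} {a b : ℝ}
  (hv : ∀ x ∈ Icc a b, HasDerivWithinAt v (v' x) (Icc a b) x) (hv' : ContinuousOn v' (Icc a b))
  (ha : v a = 0)
include hv hv' ha

theorem sq_eq_intervalIntegral_two_mul_mul_deriv {x : ℝ} (hx : x ∈ Icc a b) :
    v x ^ 2 = ∫ y in a..x, 2 * v y * v' y := by
  have hsub : Icc a x ⊆ Icc a b := Icc_subset_Icc le_rfl hx.2
  have hvc : ContinuousOn v (Icc a x) := fun y hy => (hv y (hsub hy)).continuousWithinAt.mono hsub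
  rw [integral_eq_sub_of_hasDeriv_right_of_le (f := fun y => v y ^ 2) hx.1 (hvc.pow 2), ha]
  · ring
  · intro y hy
    have hd : HasDerivAt v (v' y) y :=
      (hv y (hsub (Ioo_subset_Icc_self hy))).hasDerivAt (Icc_mem_nhds hy.1 (hy.2.trans_le hx.2))
    simpa using (hd.fun_pow 2).hasDerivWithinAt
  · refine ContinuousOn.intervalIntegrable ?_
    rw [uIcc_of_le hx.1]
    exact ((continuousOn_const.mul hvc).mul (hv'.mono hsub))

theorem sq_sq_le_four_mul_intervalIntegral_sq {x : ℝ} (hx : x ∈ Icc a b) :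
    (v x ^ 2) ^ 2 ≤ 4 * ((∫ y in a..b, v y ^ 2) * ∫ y in a..b, v' y ^ 2) := by
  have hsub : Icc a x ⊆ Icc a b := Icc_subset_Icc le_rfl hx.2
  have hvc : ContinuousOn v (Icc a b) := fun y hy => (hv y hy).continuousWithinAt
  calc (v x ^ 2) ^ 2 = 4 * (∫ y in a..x, v y * v' y) ^ 2 := by
        rw [sq_eq_intervalIntegral_two_mul_mul_deriv hv hv' ha hx]
        simp_rw [mul_assoc, intervalIntegral.integral_const_mul]
        ring
    _ ≤ 4 * ((∫ y in a..x, v y ^ 2) * ∫ y in a..x, v' y ^ 2) := by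
        gcongr
        exact sq_intervalIntegral_mul_le hx.1 (hvc.mono hsub) (hv'.mono hsub)
    _ ≤ 4 * ((∫ y in a..b, v y ^ 2) * ∫ y in a..b, v' y ^ 2) := by
        gcongr 4 * ?_
        exact mul_le_mul (intervalIntegral_sq_le_of_mem_Icc hvc hx)
          (intervalIntegral_sq_le_of_mem_Icc hv' hx) (integral_nonneg hx.1 fun y _ => sq_nonneg _)
          (integral_nonneg (hx.1.trans hx.2) fun y _ => sq_nonneg _)

theorem sq_intervalIntegral_pow_four_le (hab : a ≤ b) :
    (∫ x in a..b, v x ^ 4) ^ 2 ≤ 4 * (∫ x in a..b, v x ^ 2) ^ 3 * ∫ x in a..b, v' x ^ 2 := by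
  set D := ∫ x in a..b, v x ^ 2
  set A := ∫ x in a..b, v' x ^ 2
  have hvc : ContinuousOn v (Icc a b) := fun y hy => (hv y hy).continuousWithinAt
  have hD : 0 ≤ D := integral_nonneg hab fun x _ => sq_nonneg (v x)
  have hA : 0 ≤ A := integral_nonneg hab fun x _ => sq_nonneg (v' x)
  have hsup : ∀ x ∈ Icc a b, v x ^ 2 ≤ √(4 * (D * A)) := fun x hx =>
    Real.le_sqrt_of_sq_le (sq_sq_le_four_mul_intervalIntegral_sq hv hv' ha hx)
  have hL4 : ∫ x in a..b, v x ^ 4 ≤ √(4 * (D * A)) * D := by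
    rw [← intervalIntegral.integral_const_mul]
    refine integral_mono_on hab ((hvc.pow 4).intervalIntegrable_of_Icc hab)
      ((continuousOn_const.mul (hvc.pow 2)).intervalIntegrable_of_Icc hab) fun x hx => ?_
    calc v x ^ 4 = v x ^ 2 * v x ^ 2 := by ring
      _ ≤ √(4 * (D * A)) * v x ^ 2 := by gcongr; exact hsup x hx
  calc (∫ x in a..b, v x ^ 4) ^ 2 ≤ (√(4 * (D * A)) * D) ^ 2 :=
        pow_le_pow_left₀ (integral_nonneg hab fun x _ => by positivity) hL4 2
    _ = 4 * D ^ 3 * A := by rw [mul_pow, Real.sq_sqrt (by positivity)]; ring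

theorem pow_eight_intervalIntegral_mul_mul_deriv_le (hab : a ≤ b) {u : ℝ → ℝ}
    (hu : ContinuousOn u (Icc a b)) :
    (∫ x in a..b, u x * v x * v' x) ^ 8 ≤
      4 * (∫ x in a..b, u x ^ 4) ^ 2 * (∫ x in a..b, v x ^ 2) ^ 3 *
        (∫ x in a..b, v' x ^ 2) ^ 5 := by
  have hvc : ContinuousOn v (Icc a b) := fun y hy => (hv y hy).continuousWithinAt
  set E := ∫ x in a..b, (u x * v x) ^ 2
  have hI := sq_intervalIntegral_mul_le (f := fun x => u x * v x) hab (hu.mul hvc) hv'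
  have hE : E ^ 2 ≤ (∫ x in a..b, u x ^ 4) * ∫ x in a..b, v x ^ 4 := by
    have h := sq_intervalIntegral_mul_le (f := fun x => u x ^ 2) (g := fun x => v x ^ 2) hab
      (hu.pow 2) (hvc.pow 2)
    simpa only [← pow_mul, ← mul_pow] using h
  have hW := sq_intervalIntegral_pow_four_le hv hv' ha hab
  calc (∫ x in a..b, u x * v x * v' x) ^ 8
        = (((∫ x in a..b, u x * v x * v' x) ^ 2) ^ 2) ^ 2 := by ring
    _ ≤ ((E * ∫ x in a..b, v' x ^ 2) ^ 2) ^ 2 := by gcongr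
    _ = (E ^ 2) ^ 2 * (∫ x in a..b, v' x ^ 2) ^ 4 := by ring
    _ ≤ ((∫ x in a..b, u x ^ 4) * ∫ x in a..b, v x ^ 4) ^ 2 * (∫ x in a..b, v' x ^ 2) ^ 4 := by
        gcongr
    _ = (∫ x in a..b, u x ^ 4) ^ 2 * (∫ x in a..b, v x ^ 4) ^ 2 * (∫ x in a..b, v' x ^ 2) ^ 4 := by
        ring
    _ ≤ (∫ x in a..b, u x ^ 4) ^ 2 * (4 * (∫ x in a..b, v x ^ 2) ^ 3 * ∫ x in a..b, v' x ^ 2) *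
          (∫ x in a..b, v' x ^ 2) ^ 4 := by gcongr
    _ = _ := by ring

end Agmon

theorem abs_le_add_of_pow_eight_le {t x y : ℝ} (hx : 0 ≤ x) (hy : 0 ≤ y)
    (h : t ^ 8 ≤ 56 * x ^ 5 * y ^ 3) : |t| ≤ x + y := by
  have hbinom : (x + y) ^ 8 = 56 * x ^ 5 * y ^ 3 + (x ^ 8 + 8 * x ^ 7 * y + 28 * x ^ 6 * y ^ 2 +
      70 * x ^ 4 * y ^ 4 + 56 * x ^ 3 * y ^ 5 + 28 * x ^ 2 * y ^ 6 + 8 * x * y ^ 7 + y ^ 8) := by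
    ring
  refine le_of_pow_le_pow_left₀ (by norm_num : 8 ≠ 0) (by positivity) ?_
  calc |t| ^ 8 = t ^ 8 := by rw [pow_abs, abs_of_nonneg (by positivity)]
    _ ≤ 56 * x ^ 5 * y ^ 3 := h
    _ ≤ (x + y) ^ 8 := by rw [hbinom]; exact le_add_of_nonneg_right (by positivity)

theorem abs_le_mul_add_rpow_mul_of_pow_eight_le {t ε A B D : ℝ} (hε : 0 < ε) (hA : 0 ≤ A)
    (hB : 0 ≤ B) (hD : 0 ≤ D) (h : t ^ 8 ≤ 4 * B ^ 2 * D ^ 3 * A ^ 5) :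
    |t| ≤ ε * A + ε ^ (-(5:ℝ)/3) * B ^ ((2:ℝ)/3) * D := by
  have hε' : (ε ^ (-(5:ℝ)/3)) ^ 3 = (ε ^ 5)⁻¹ := by
    rw [← Real.rpow_natCast, ← Real.rpow_mul hε.le, ← Real.rpow_natCast, ← Real.rpow_neg hε.le]
    norm_num
  have hB' : (B ^ ((2:ℝ)/3)) ^ 3 = B ^ 2 := by
    rw [← Real.rpow_natCast, ← Real.rpow_mul hB]
    norm_num
  refine abs_le_add_of_pow_eight_le (by positivity) (by positivity) ?_
  calc t ^ 8 ≤ 4 * B ^ 2 * D ^ 3 * A ^ 5 := h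
    _ ≤ 56 * B ^ 2 * D ^ 3 * A ^ 5 := by gcongr; norm_num
    _ = 56 * (ε * A) ^ 5 * (ε ^ (-(5:ℝ)/3) * B ^ ((2:ℝ)/3) * D) ^ 3 := by
        rw [mul_pow, mul_pow, mul_pow, hε', hB']
        field_simp

/-- **Key trilinear estimate for the Burgers nonlinearity.** There is a constant
`C > 0` such that for every continuous `u`, every `C¹` function `v` vanishing at
the endpoints of `[0,1]`, and every `ε > 0`,
`|∫₀¹ u v v'| ≤ ε ‖v'‖_{L²}² + C ε^{-5/3} ‖u‖_{L⁴}^{8/3} ‖v‖_{L²}²`. -/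
theorem trilinear_estimate :
    ∃ C : ℝ, 0 < C ∧
      ∀ (u v v' : ℝ → ℝ),
        ContinuousOn u (Icc (0:ℝ) 1) →
        (∀ x ∈ Icc (0:ℝ) 1, HasDerivWithinAt v (v' x) (Icc (0:ℝ) 1) x) →
        ContinuousOn v' (Icc (0:ℝ) 1) →
        v 0 = 0 → v 1 = 0 →
        ∀ ε : ℝ, 0 < ε →
          |∫ x in (0:ℝ)..1, u x * v x * v' x| ≤
            ε * (∫ x in (0:ℝ)..1, v' x ^ 2) +
              C * ε ^ (-(5:ℝ)/3) * (∫ x in (0:ℝ)..1, u x ^ 4) ^ ((2:ℝ)/3) *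
                (∫ x in (0:ℝ)..1, v x ^ 2) := by
  refine ⟨1, one_pos, fun u v v' hu hv hv' h0 _ ε hε => ?_⟩
  rw [one_mul]
  exact abs_le_mul_add_rpow_mul_of_pow_eight_le hε
    (integral_nonneg zero_le_one fun x _ => sq_nonneg (v' x))
    (integral_nonneg zero_le_one fun x _ => by positivity)
    (integral_nonneg zero_le_one fun x _ => sq_nonneg (v x))
    (pow_eight_intervalIntegral_mul_mul_deriv_le hv hv' h0 zero_le_one hu)
end

section
/- (The Dirichlet space H¹₀(0,1) is an algebra.) For all continuously differentiable functions f, g : [0,1] → ℝ with f(0) = f(1) = 0 and g(0) = g(1) = 0 one has ‖(fg)'‖_{L²} ≤ 2 ‖f'‖_{L²} ‖g'‖_{L²}. -/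
/-!
If `f` vanishes at `0`, then `f x = ∫₀ˣ f'`, so Cauchy–Schwarz gives `f(x)² ≤ ‖f'‖²` on `[0,1]`.
Hence `(f'g + fg')² ≤ 2‖g'‖² f'² + 2‖f'‖² g'²` pointwise, and integrating yields
`‖(fg)'‖² ≤ 4‖f'‖²‖g'‖²`.
-/

open MeasureTheory Set intervalIntegral

theorem sq_intervalIntegral_le_mul_intervalIntegral_sq {φ : ℝ → ℝ} {a b : ℝ} (hab : a ≤ b)
    (hφ : ContinuousOn φ (Icc a b)) :
    (∫ x in a..b, φ x) ^ 2 ≤ (b - a) * ∫ x in a..b, φ x ^ 2 := by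
  rcases hab.eq_or_lt with rfl | hab
  · simp
  have jensen : (⨍ x in a..b, φ x) ^ 2 ≤ ⨍ x in a..b, φ x ^ 2 := by
    rw [uIoc_of_le hab.le]
    have : NeZero (volume.restrict (Ioc a b)) := ⟨by simp [hab]⟩
    exact (Even.convexOn_pow even_two).map_average_le (continuousOn_pow 2) isClosed_univ
      (by simp) (hφ.integrableOn_Icc.mono_set Ioc_subset_Icc_self)
      ((hφ.pow 2).integrableOn_Icc.mono_set Ioc_subset_Icc_self)
  have hba : 0 < b - a := sub_pos.2 hab
  rw [interval_average_eq, interval_average_eq, smul_eq_mul, smul_eq_mul, mul_pow,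
    inv_pow, ← div_eq_inv_mul, ← div_eq_inv_mul, div_le_div_iff₀ (by positivity) hba] at jensen
  nlinarith

theorem sq_le_mul_intervalIntegral_deriv_sq {f f' : ℝ → ℝ} {a b : ℝ}
    (hf : ∀ x ∈ Icc a b, HasDerivWithinAt f (f' x) (Icc a b) x)
    (hf' : ContinuousOn f' (Icc a b)) (hfa : f a = 0) {x : ℝ} (hx : x ∈ Icc a b) :
    f x ^ 2 ≤ (b - a) * ∫ t in a..b, f' t ^ 2 := by
  obtain ⟨hax, hxb⟩ := hx
  have hsub : Icc a x ⊆ Icc a b := Icc_subset_Icc_right hxb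
  have ftc : ∫ t in a..x, f' t = f x := by
    rw [integral_eq_sub_of_hasDeriv_right_of_le hax
      (fun y hy => (hf y (hsub hy)).continuousWithinAt.mono hsub)
      (fun y hy => (hf y (hsub (Ioo_subset_Icc_self hy))).mono_of_mem_nhdsWithin
        (Icc_mem_nhdsGT_of_mem ⟨hy.1.le, hy.2.trans_le hxb⟩))
      ((hf'.mono hsub).intervalIntegrable_of_Icc hax), hfa, sub_zero]
  calc f x ^ 2 ≤ (x - a) * ∫ t in a..x, f' t ^ 2 :=
        ftc ▸ sq_intervalIntegral_le_mul_intervalIntegral_sq hax (hf'.mono hsub)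
    _ ≤ (b - a) * ∫ t in a..b, f' t ^ 2 := by
        refine mul_le_mul (by linarith) ?_ (integral_nonneg hax fun t _ => sq_nonneg _)
          (by linarith)
        exact integral_mono_interval le_rfl hax hxb (μ := volume)
          (.of_forall fun t => sq_nonneg (f' t))
          ((hf'.pow 2).intervalIntegrable_of_Icc (hax.trans hxb))

theorem sq_mul_add_mul_le_of_sq_le {p q u v F G : ℝ} (hu : u ^ 2 ≤ G) (hv : v ^ 2 ≤ F) :
    (p * u + v * q) ^ 2 ≤ 2 * G * p ^ 2 + 2 * F * q ^ 2 := by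
  nlinarith [sq_nonneg (p * u - v * q), mul_le_mul_of_nonneg_left hu (sq_nonneg p),
    mul_le_mul_of_nonneg_left hv (sq_nonneg q)]

theorem H10_algebra_general (f f' g g' : ℝ → ℝ)
    (hf : ∀ x ∈ Icc (0:ℝ) 1, HasDerivWithinAt f (f' x) (Icc (0:ℝ) 1) x)
    (hf' : ContinuousOn f' (Icc (0:ℝ) 1))
    (hg : ∀ x ∈ Icc (0:ℝ) 1, HasDerivWithinAt g (g' x) (Icc (0:ℝ) 1) x)
    (hg' : ContinuousOn g' (Icc (0:ℝ) 1))
    (hf0 : f 0 = 0) (hg0 : g 0 = 0) :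
    Real.sqrt (∫ x in (0:ℝ)..1, (f' x * g x + f x * g' x) ^ 2) ≤
      2 * Real.sqrt (∫ x in (0:ℝ)..1, f' x ^ 2) *
        Real.sqrt (∫ x in (0:ℝ)..1, g' x ^ 2) := by
  set F := ∫ x in (0:ℝ)..1, f' x ^ 2
  set G := ∫ x in (0:ℝ)..1, g' x ^ 2
  have hfF : ∀ x ∈ Icc (0:ℝ) 1, f x ^ 2 ≤ F := fun x hx => by
    simpa using sq_le_mul_intervalIntegral_deriv_sq hf hf' hf0 hx
  have hgG : ∀ x ∈ Icc (0:ℝ) 1, g x ^ 2 ≤ G := fun x hx => by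
    simpa using sq_le_mul_intervalIntegral_deriv_sq hg hg' hg0 hx
  have hfc : ContinuousOn f (Icc 0 1) := fun x hx => (hf x hx).continuousWithinAt
  have hgc : ContinuousOn g (Icc 0 1) := fun x hx => (hg x hx).continuousWithinAt
  have hF : 0 ≤ F := integral_nonneg zero_le_one fun x _ => sq_nonneg _
  have hG : 0 ≤ G := integral_nonneg zero_le_one fun x _ => sq_nonneg _
  have hf'2 : IntervalIntegrable (fun x => f' x ^ 2) volume 0 1 :=
    (hf'.pow 2).intervalIntegrable_of_Icc zero_le_one
  have hg'2 : IntervalIntegrable (fun x => g' x ^ 2) volume 0 1 :=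
    (hg'.pow 2).intervalIntegrable_of_Icc zero_le_one
  have bound : ∫ x in (0:ℝ)..1, (f' x * g x + f x * g' x) ^ 2
      ≤ ∫ x in (0:ℝ)..1, 2 * G * f' x ^ 2 + 2 * F * g' x ^ 2 :=
    integral_mono_on zero_le_one
      ((((hf'.mul hgc).add (hfc.mul hg')).pow 2).intervalIntegrable_of_Icc zero_le_one)
      ((hf'2.const_mul _).add (hg'2.const_mul _))
      fun x hx => sq_mul_add_mul_le_of_sq_le (hgG x hx) (hfF x hx)
  have total : ∫ x in (0:ℝ)..1, 2 * G * f' x ^ 2 + 2 * F * g' x ^ 2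
      = (2 * Real.sqrt F * Real.sqrt G) ^ 2 := by
    rw [intervalIntegral.integral_add (hf'2.const_mul _) (hg'2.const_mul _),
      intervalIntegral.integral_const_mul, intervalIntegral.integral_const_mul, mul_pow, mul_pow,
      Real.sq_sqrt hF, Real.sq_sqrt hG]
    ring
  calc Real.sqrt (∫ x in (0:ℝ)..1, (f' x * g x + f x * g' x) ^ 2)
      ≤ Real.sqrt ((2 * Real.sqrt F * Real.sqrt G) ^ 2) := Real.sqrt_le_sqrt (total ▸ bound)
    _ = 2 * Real.sqrt F * Real.sqrt G := Real.sqrt_sq (by positivity)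

/-- **The Dirichlet space H¹₀(0,1) is an algebra.** For continuously
differentiable `f, g : [0,1] → ℝ` vanishing at the endpoints,
`‖(fg)'‖_{L²} ≤ 2 ‖f'‖_{L²} ‖g'‖_{L²}`. -/
theorem H10_algebra (f f' g g' : ℝ → ℝ)
    (hf : ∀ x ∈ Icc (0:ℝ) 1, HasDerivWithinAt f (f' x) (Icc (0:ℝ) 1) x)
    (hf' : ContinuousOn f' (Icc (0:ℝ) 1))
    (hg : ∀ x ∈ Icc (0:ℝ) 1, HasDerivWithinAt g (g' x) (Icc (0:ℝ) 1) x)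
    (hg' : ContinuousOn g' (Icc (0:ℝ) 1))
    (hf0 : f 0 = 0) (hf1 : f 1 = 0) (hg0 : g 0 = 0) (hg1 : g 1 = 0) :
    Real.sqrt (∫ x in (0:ℝ)..1, (f' x * g x + f x * g' x) ^ 2) ≤
      2 * Real.sqrt (∫ x in (0:ℝ)..1, f' x ^ 2) *
        Real.sqrt (∫ x in (0:ℝ)..1, g' x ^ 2) :=
  H10_algebra_general f f' g g' hf hf' hg hg' hf0 hg0
end

section
/- (Abstract form of Corollary 2.2 of the paper: closability of the weighted gradient.) Let H be a real separable Hilbert space with orthonormal basis (e_k)_{k∈ℕ}, let ν be a Borel probability measure on H, let λ : ℕ → ℝ be a bounded sequence with λ_k > 0 for all k, and let (C_k)_{k∈ℕ} be nonnegative constants. Assume that for every k and every φ ∈ C¹_b(H) one has |∫_H ⟨Dφ(x), e_k⟩ ν(dx)| ≤ C_k ‖φ‖_{L²(ν)}. If (φ_n) is a sequence in C¹_b(H) such that φ_n → 0 in L²(H,ν) and such that the H-valued functions G_n(x) = ∑_k λ_k ⟨Dφ_n(x), e_k⟩ e_k converge in L²(H,ν;H) to some F, then F = 0 ν-almost everywhere.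 -/
open MeasureTheory Filter
open scoped RealInnerProductSpace Topology

/-- `φ : H → ℝ` is of class `C¹_b` with gradient `Dφ : H → H`: `φ` is bounded,
Fréchet differentiable with gradient `Dφ`, and `Dφ` is bounded and continuous. -/
def IsC1b {H : Type*} [NormedAddCommGroup H] [InnerProductSpace ℝ H] [CompleteSpace H]
    (φ : H → ℝ) (Dφ : H → H) : Prop :=
  (∃ M : ℝ, ∀ x, |φ x| ≤ M) ∧ (∀ x, HasGradientAt φ (Dφ x) x) ∧
    Continuous Dφ ∧ (∃ M : ℝ, ∀ x, ‖Dφ x‖ ≤ M)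

/-!
Fix a coordinate `k` and a test function `ψ ∈ C¹_b`. By the product rule,
`λ_k ∫ ψ ⟨Dφ_n, e_k⟩ = λ_k ∫ ⟨D(φ_n ψ), e_k⟩ - λ_k ∫ φ_n ⟨Dψ, e_k⟩`; the first term is at most
`λ_k C_k ‖ψ‖_∞ ‖φ_n‖_{L²}` by hypothesis and the second at most `λ_k ‖Dψ‖_∞ ‖φ_n‖_{L¹}`, so
both vanish in the limit, while the left side is `∫ ψ ⟨G_n, e_k⟩ → ∫ ψ ⟨F, e_k⟩`. Hence
`⟨F, e_k⟩` annihilates `C¹_b(H)`. These functions form a point-separating algebra of bounded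
continuous functions (`arctan ⟨·, x - y⟩` separates `x` and `y`), and such an algebra determines
finite measures on a Polish space; applied to the positive and negative parts of `⟨F, e_k⟩ ν`
this gives `⟨F, e_k⟩ = 0` a.e., for every `k`.
-/

open BoundedContinuousFunction
open scoped ENNReal

section Gradient

variable {H : Type*} [NormedAddCommGroup H] [InnerProductSpace ℝ H] [CompleteSpace H]
  {φ ψ : H → ℝ} {u v x : H}

theorem HasGradientAt.add (hφ : HasGradientAt φ u x) (hψ : HasGradientAt ψ v x) :
    HasGradientAt (fun y => φ y + ψ y) (u + v) x := by
  rw [hasGradientAt_iff_hasFDerivAt, map_add]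
  exact hφ.hasFDerivAt.add hψ.hasFDerivAt

theorem HasGradientAt.mul (hφ : HasGradientAt φ u x) (hψ : HasGradientAt ψ v x) :
    HasGradientAt (fun y => φ y * ψ y) (ψ x • u + φ x • v) x := by
  rw [hasGradientAt_iff_hasFDerivAt, map_add, map_smul, map_smul, add_comm]
  exact hφ.hasFDerivAt.mul hψ.hasFDerivAt

theorem HasDerivAt.hasGradientAt_comp_inner {f : ℝ → ℝ} {f' : ℝ} (hf : HasDerivAt f f' ⟪x, v⟫) :
    HasGradientAt (fun y => f ⟪y, v⟫) (f' • v) x := by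
  have hL : HasFDerivAt (fun y : H => ⟪y, v⟫) (innerSL ℝ v) x := by
    convert (innerSL ℝ v).hasFDerivAt using 1
    funext y
    exact real_inner_comm _ _
  rw [hasGradientAt_iff_hasFDerivAt]
  refine (hf.comp_hasFDerivAt x hL).congr_fderiv ?_
  ext y
  simp

end Gradient

namespace IsC1b

variable {H : Type*} [NormedAddCommGroup H] [InnerProductSpace ℝ H] [CompleteSpace H]
  {φ ψ : H → ℝ} {Dφ Dψ : H → H}

theorem continuous (h : IsC1b φ Dφ) : Continuous φ :=
  continuous_iff_continuousAt.2 fun x => (h.2.1 x).continuousAt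

noncomputable def toBoundedContinuousFunction (h : IsC1b φ Dφ) : H →ᵇ ℝ :=
  .ofNormedAddCommGroup φ h.continuous h.1.choose h.1.choose_spec

theorem exists_abs_inner_le (h : IsC1b φ Dφ) (v : H) : ∃ K, ∀ x, |⟪Dφ x, v⟫| ≤ K := by
  obtain ⟨K, hK⟩ := h.2.2.2
  exact ⟨K * ‖v‖, fun x => (abs_real_inner_le_norm _ _).trans
    (mul_le_mul_of_nonneg_right (hK x) (norm_nonneg _))⟩

theorem const (c : ℝ) : IsC1b (fun _ : H => c) (fun _ => 0) :=
  ⟨⟨|c|, fun _ => le_rfl⟩, fun _ => hasGradientAt_const _ _, continuous_const, ⟨0, by simp⟩⟩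

theorem add (hφ : IsC1b φ Dφ) (hψ : IsC1b ψ Dψ) :
    IsC1b (fun x => φ x + ψ x) (fun x => Dφ x + Dψ x) := by
  obtain ⟨⟨M, hM⟩, hφg, hφc, ⟨K, hK⟩⟩ := hφ
  obtain ⟨⟨N, hN⟩, hψg, hψc, ⟨L, hL⟩⟩ := hψ
  exact ⟨⟨M + N, fun x => (abs_add_le _ _).trans (add_le_add (hM x) (hN x))⟩,
    fun x => (hφg x).add (hψg x), hφc.add hψc,
    ⟨K + L, fun x => (norm_add_le _ _).trans (add_le_add (hK x) (hL x))⟩⟩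

theorem mul (hφ : IsC1b φ Dφ) (hψ : IsC1b ψ Dψ) :
    IsC1b (fun x => φ x * ψ x) (fun x => ψ x • Dφ x + φ x • Dψ x) := by
  have hφc := hφ.continuous
  have hψc := hψ.continuous
  obtain ⟨⟨M, hM⟩, hφg, hDφc, ⟨K, hK⟩⟩ := hφ
  obtain ⟨⟨N, hN⟩, hψg, hDψc, ⟨L, hL⟩⟩ := hψ
  have hM0 : 0 ≤ M := (abs_nonneg _).trans (hM 0)
  have hN0 : 0 ≤ N := (abs_nonneg _).trans (hN 0)
  refine ⟨⟨M * N, fun x => ?_⟩, fun x => (hφg x).mul (hψg x),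
    (hψc.smul hDφc).add (hφc.smul hDψc), ⟨N * K + M * L, fun x => ?_⟩⟩
  · rw [abs_mul]
    exact mul_le_mul (hM x) (hN x) (abs_nonneg _) hM0
  · refine (norm_add_le _ _).trans (add_le_add ?_ ?_) <;> rw [norm_smul, Real.norm_eq_abs]
    · exact mul_le_mul (hN x) (hK x) (norm_nonneg _) hN0
    · exact mul_le_mul (hM x) (hL x) (norm_nonneg _) hM0

theorem comp_inner {f f' : ℝ → ℝ} (hf : IsC1b f f') (v : H) :
    IsC1b (fun x => f ⟪x, v⟫) (fun x => f' ⟪x, v⟫ • v) := by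
  obtain ⟨⟨M, hM⟩, hfg, hf'c, ⟨K, hK⟩⟩ := hf
  refine ⟨⟨M, fun x => hM _⟩, fun x => (hfg _).hasDerivAt'.hasGradientAt_comp_inner,
    (hf'c.comp (continuous_id.inner continuous_const)).smul continuous_const,
    ⟨K * ‖v‖, fun x => ?_⟩⟩
  rw [norm_smul]
  exact mul_le_mul_of_nonneg_right (hK _) (norm_nonneg _)

end IsC1b

theorem isC1b_arctan : IsC1b Real.arctan (fun t => 1 / (1 + t ^ 2)) := by
  refine ⟨⟨Real.pi / 2, fun t => abs_le.2 ⟨(Real.neg_pi_div_two_lt_arctan t).le,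
    (Real.arctan_lt_pi_div_two t).le⟩⟩, fun t => (Real.hasDerivAt_arctan t).hasGradientAt',
    continuous_const.div (by fun_prop) fun t => by positivity, ⟨1, fun t => ?_⟩⟩
  rw [Real.norm_eq_abs, abs_of_pos (by positivity)]
  exact div_le_one_of_le₀ (by nlinarith [sq_nonneg t]) (by positivity)

section Subalgebra

variable (H : Type*) [NormedAddCommGroup H] [InnerProductSpace ℝ H] [CompleteSpace H]

def c1bSubalgebra : StarSubalgebra ℝ (H →ᵇ ℝ) where
  carrier := {f | ∃ Df, IsC1b f Df}
  mul_mem' := fun ⟨_, hf⟩ ⟨_, hg⟩ => ⟨_, hf.mul hg⟩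
  add_mem' := fun ⟨_, hf⟩ ⟨_, hg⟩ => ⟨_, hf.add hg⟩
  algebraMap_mem' c := ⟨_, IsC1b.const c⟩
  star_mem' := fun {f} hf => by rwa [Set.mem_ofPred_eq, coe_star, star_trivial]

theorem c1bSubalgebra_separatesPoints :
    ((c1bSubalgebra H).map (toContinuousMapStarₐ ℝ)).SeparatesPoints := by
  intro x y hxy
  have hψ := isC1b_arctan.comp_inner (x - y)
  refine ⟨_, ⟨_, ⟨hψ.toBoundedContinuousFunction, ⟨_, hψ⟩, rfl⟩, rfl⟩, ?_⟩
  show Real.arctan ⟪x, x - y⟫ ≠ Real.arctan ⟪y, x - y⟫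
  rw [Real.arctan_injective.ne_iff, ← sub_ne_zero, ← inner_sub_left, real_inner_self_eq_norm_sq]
  exact pow_ne_zero 2 (norm_ne_zero_iff.2 (sub_ne_zero.2 hxy))

end Subalgebra

theorem ENNReal.ofReal_eq_ofReal_neg_iff {a : ℝ} :
    ENNReal.ofReal a = ENNReal.ofReal (-a) ↔ a = 0 := by
  refine ⟨fun h => ?_, fun h => by simp [h]⟩
  rcases le_total a 0 with ha | ha
  · exact le_antisymm ha
      (neg_nonpos.1 (ENNReal.ofReal_eq_zero.1 (h.symm.trans (ENNReal.ofReal_of_nonpos ha))))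
  · exact le_antisymm
      (ENNReal.ofReal_eq_zero.1 (h.trans (ENNReal.ofReal_of_nonpos (neg_nonpos.2 ha)))) ha

theorem integral_withDensity_ofReal {E : Type*} [MeasurableSpace E] {μ : Measure E}
    {g : E → ℝ} (hg : AEMeasurable g μ) (f : E → ℝ) :
    ∫ x, f x ∂μ.withDensity (fun x => ENNReal.ofReal (g x)) = ∫ x, max (g x) 0 * f x ∂μ := by
  rw [integral_withDensity_eq_integral_toReal_smul₀ hg.ennreal_ofReal
    (ae_of_all _ fun _ => ENNReal.ofReal_lt_top)]
  simp [ENNReal.toReal_ofReal']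

theorem ae_eq_zero_of_forall_mem_subalgebra_integral_mul_eq_zero {E : Type*}
    [PseudoEMetricSpace E] [MeasurableSpace E] [BorelSpace E] [CompleteSpace E]
    [SecondCountableTopology E] {μ : Measure E} [IsFiniteMeasure μ]
    {A : StarSubalgebra ℝ (E →ᵇ ℝ)} (hA : (A.map (toContinuousMapStarₐ ℝ)).SeparatesPoints)
    {g : E → ℝ} (hg : Integrable g μ) (h : ∀ f ∈ A, ∫ x, f x * g x ∂μ = 0) : g =ᵐ[μ] 0 := by
  have := isFiniteMeasure_withDensity_ofReal hg.2
  have := isFiniteMeasure_withDensity_ofReal hg.neg.2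
  have hP : μ.withDensity (fun x => ENNReal.ofReal (g x))
      = μ.withDensity (fun x => ENNReal.ofReal (-g x)) := by
    refine ext_of_forall_mem_subalgebra_integral_eq_of_pseudoEMetric_complete_countable hA
      fun f hf => ?_
    have hfb : ∀ᵐ x ∂μ, ‖f x‖ ≤ ‖f‖ := ae_of_all _ f.norm_coe_le_norm
    rw [integral_withDensity_ofReal hg.1.aemeasurable,
      integral_withDensity_ofReal (g := fun x => -g x) hg.1.aemeasurable.neg, ← sub_eq_zero,
      ← integral_sub (hg.pos_part.mul_bdd f.continuous.aestronglyMeasurable hfb)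
        (hg.neg_part.mul_bdd f.continuous.aestronglyMeasurable hfb)]
    convert h f hf using 1
    congr 1 with x
    rw [← sub_mul, max_zero_sub_max_neg_zero_eq_self, mul_comm]
  filter_upwards [(withDensity_eq_iff_of_sigmaFinite hg.1.aemeasurable.ennreal_ofReal
    hg.neg.1.aemeasurable.ennreal_ofReal).1 hP] with x hx
  exact ENNReal.ofReal_eq_ofReal_neg_iff.1 hx

theorem ae_eq_zero_of_forall_isC1b_integral_mul_eq_zero {H : Type*} [NormedAddCommGroup H]
    [InnerProductSpace ℝ H] [CompleteSpace H] [SecondCountableTopology H] [MeasurableSpace H]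
    [BorelSpace H] {μ : Measure H} [IsFiniteMeasure μ] {g : H → ℝ} (hg : Integrable g μ)
    (h : ∀ ψ Dψ, IsC1b ψ Dψ → ∫ x, ψ x * g x ∂μ = 0) : g =ᵐ[μ] 0 :=
  ae_eq_zero_of_forall_mem_subalgebra_integral_mul_eq_zero (c1bSubalgebra_separatesPoints H) hg
    fun _ ⟨_, hf⟩ => h _ _ hf

section Convergence

variable {α ι E F : Type*} [MeasurableSpace α] {μ : Measure α} {l : Filter ι}
  [NormedAddCommGroup E] [NormedAddCommGroup F]

theorem tendsto_eLpNorm_zero_of_norm_le_mul {f : ι → α → E} {g : ι → α → F} {c : ℝ}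
    {p : ℝ≥0∞} (hfg : ∀ i x, ‖f i x‖ ≤ c * ‖g i x‖)
    (hg : Tendsto (fun i => eLpNorm (g i) p μ) l (𝓝 0)) :
    Tendsto (fun i => eLpNorm (f i) p μ) l (𝓝 0) := by
  have hc : Tendsto (fun i => ENNReal.ofReal c * eLpNorm (g i) p μ) l (𝓝 0) := by
    simpa using ENNReal.Tendsto.const_mul hg (Or.inr ENNReal.ofReal_ne_top)
  exact tendsto_of_tendsto_of_tendsto_of_le_of_le tendsto_const_nhds hc (fun _ => zero_le)
    fun i => eLpNorm_le_mul_eLpNorm_of_ae_le_mul (ae_of_all _ (hfg i)) p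

theorem tendsto_integral_zero_of_tendsto_eLpNorm [NormedSpace ℝ E] [IsProbabilityMeasure μ]
    {f : ι → α → E} {p : ℝ≥0∞} (hp : 1 ≤ p) (hf : ∀ i, AEStronglyMeasurable (f i) μ)
    (h : Tendsto (fun i => eLpNorm (f i) p μ) l (𝓝 0)) :
    Tendsto (fun i => ∫ x, f i x ∂μ) l (𝓝 0) := by
  refine tendsto_zero_iff_enorm_tendsto_zero.2 <|
    tendsto_of_tendsto_of_tendsto_of_le_of_le tendsto_const_nhds h (fun _ => zero_le) fun i => ?_
  calc ‖∫ x, f i x ∂μ‖ₑ ≤ eLpNorm (f i) 1 μ :=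
        (enorm_integral_le_lintegral_enorm _).trans_eq eLpNorm_one_eq_lintegral_enorm.symm
    _ ≤ eLpNorm (f i) p μ := eLpNorm_le_eLpNorm_of_exponent_le hp (hf i)

end Convergence

theorem MemLp.sqrt_integral_sq_eq {α : Type*} [MeasurableSpace α] {μ : Measure α} {f : α → ℝ}
    (hf : MemLp f 2 μ) : √(∫ x, f x ^ 2 ∂μ) = (eLpNorm f 2 μ).toReal := by
  rw [hf.eLpNorm_eq_integral_rpow_norm two_ne_zero ENNReal.ofNat_ne_top,
    ENNReal.toReal_ofReal (by positivity), Real.sqrt_eq_rpow]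
  norm_num

namespace IsC1b

variable {H : Type*} [NormedAddCommGroup H] [InnerProductSpace ℝ H] [CompleteSpace H]
  [MeasurableSpace H] [OpensMeasurableSpace H] {μ : Measure H}
  {φ : H → ℝ} {Dφ : H → H}

theorem memLp [IsFiniteMeasure μ] (h : IsC1b φ Dφ) (p : ℝ≥0∞) : MemLp φ p μ :=
  (memLp_top_of_bound h.continuous.aestronglyMeasurable h.1.choose
    (ae_of_all _ h.1.choose_spec)).mono_exponent le_top

theorem integrable_inner [IsFiniteMeasure μ] (h : IsC1b φ Dφ) (v : H) :
    Integrable (fun x => ⟪Dφ x, v⟫) μ :=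
  have ⟨K, hK⟩ := h.exists_abs_inner_le v
  .of_bound (h.2.2.1.inner continuous_const).aestronglyMeasurable K (ae_of_all _ hK)

theorem integrable_mul (h : IsC1b φ Dφ) {f : H → ℝ} (hf : Integrable f μ) :
    Integrable (fun x => φ x * f x) μ :=
  hf.bdd_mul h.continuous.aestronglyMeasurable (ae_of_all _ h.1.choose_spec)

end IsC1b

section Closability

variable {H : Type*} [NormedAddCommGroup H] [InnerProductSpace ℝ H] [CompleteSpace H]
  [MeasurableSpace H] [OpensMeasurableSpace H] {ν : Measure H} [IsProbabilityMeasure ν]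
  {v : H} {φn : ℕ → H → ℝ} {Dφn : ℕ → H → H} {ψ : H → ℝ} {Dψ : H → H}

theorem tendsto_integral_mul_inner_grad_zero {C : ℝ}
    (hbound : ∀ φ Dφ, IsC1b φ Dφ → |∫ x, ⟪Dφ x, v⟫ ∂ν| ≤ C * √(∫ x, φ x ^ 2 ∂ν))
    (hC1b : ∀ n, IsC1b (φn n) (Dφn n)) (hφ0 : Tendsto (fun n => eLpNorm (φn n) 2 ν) atTop (𝓝 0))
    (hψ : IsC1b ψ Dψ) : Tendsto (fun n => ∫ x, ψ x * ⟪Dφn n x, v⟫ ∂ν) atTop (𝓝 0) := by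
  obtain ⟨M, hM⟩ := hψ.1
  obtain ⟨K, hK⟩ := hψ.exists_abs_inner_le v
  have hsq : Tendsto (fun n => √(∫ x, (φn n x * ψ x) ^ 2 ∂ν)) atTop (𝓝 0) := by
    have hsq_eq : ∀ n, √(∫ x, (φn n x * ψ x) ^ 2 ∂ν)
        = (eLpNorm (fun x => φn n x * ψ x) 2 ν).toReal :=
      fun n => MemLp.sqrt_integral_sq_eq (((hC1b n).mul hψ).memLp 2)
    simp_rw [hsq_eq]
    simpa [Function.comp_def] using (ENNReal.tendsto_toReal ENNReal.zero_ne_top).comp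
      (tendsto_eLpNorm_zero_of_norm_le_mul (fun n x => by
        rw [norm_mul, Real.norm_eq_abs (ψ x), mul_comm]
        exact mul_le_mul_of_nonneg_right (hM x) (norm_nonneg _)) hφ0)
  have hprod : Tendsto (fun n => ∫ x, ⟪ψ x • Dφn n x + φn n x • Dψ x, v⟫ ∂ν) atTop (𝓝 0) :=
    squeeze_zero_norm (fun n => hbound _ _ ((hC1b n).mul hψ)) (by simpa using hsq.const_mul C)
  have hrem : Tendsto (fun n => ∫ x, φn n x * ⟪Dψ x, v⟫ ∂ν) atTop (𝓝 0) :=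
    tendsto_integral_zero_of_tendsto_eLpNorm one_le_two
      (fun n => (hC1b n).continuous.aestronglyMeasurable.mul
        (hψ.2.2.1.inner continuous_const).aestronglyMeasurable)
      (tendsto_eLpNorm_zero_of_norm_le_mul (fun n x => by
        rw [norm_mul, Real.norm_eq_abs ⟪_, _⟫, mul_comm]
        exact mul_le_mul_of_nonneg_right (hK x) (norm_nonneg _)) hφ0)
  have hsplit : ∀ n, ∫ x, ⟪ψ x • Dφn n x + φn n x • Dψ x, v⟫ ∂ν
      = ∫ x, ψ x * ⟪Dφn n x, v⟫ ∂ν + ∫ x, φn n x * ⟪Dψ x, v⟫ ∂ν := fun n => by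
    simp_rw [inner_add_left, real_inner_smul_left]
    exact integral_add (hψ.integrable_mul ((hC1b n).integrable_inner v))
      ((hC1b n).integrable_mul (hψ.integrable_inner v))
  simpa [hsplit] using hprod.sub hrem

theorem tendsto_integral_mul_inner_grad_of_tendsto {c : ℝ} (hC1b : ∀ n, IsC1b (φn n) (Dφn n))
    {f : H → ℝ} (hf : Integrable f ν)
    (hconv : Tendsto (fun n => eLpNorm (fun x => c * ⟪Dφn n x, v⟫ - f x) 2 ν) atTop (𝓝 0))
    (hψ : IsC1b ψ Dψ) :
    Tendsto (fun n => c * ∫ x, ψ x * ⟪Dφn n x, v⟫ ∂ν) atTop (𝓝 (∫ x, ψ x * f x ∂ν)) := by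
  obtain ⟨M, hM⟩ := hψ.1
  have hdiff : Tendsto (fun n => ∫ x, ψ x * (c * ⟪Dφn n x, v⟫ - f x) ∂ν) atTop (𝓝 0) :=
    tendsto_integral_zero_of_tendsto_eLpNorm one_le_two
      (fun n => hψ.continuous.aestronglyMeasurable.mul
        ((((hC1b n).2.2.1.inner continuous_const).const_mul c).aestronglyMeasurable.sub hf.1))
      (tendsto_eLpNorm_zero_of_norm_le_mul (fun n x => by
        rw [norm_mul, Real.norm_eq_abs]
        exact mul_le_mul_of_nonneg_right (hM x) (norm_nonneg _)) hconv)
  have hsplit : ∀ n, ∫ x, ψ x * (c * ⟪Dφn n x, v⟫ - f x) ∂ν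
      = c * ∫ x, ψ x * ⟪Dφn n x, v⟫ ∂ν - ∫ x, ψ x * f x ∂ν := fun n => by
    simp_rw [mul_sub, mul_left_comm (ψ _) c]
    rw [integral_sub ((hψ.integrable_mul ((hC1b n).integrable_inner v)).const_mul c)
      (hψ.integrable_mul hf), integral_const_mul]
  simp_rw [hsplit] at hdiff
  exact tendsto_sub_nhds_zero_iff.1 hdiff

theorem integral_mul_eq_zero_of_tendsto {c C : ℝ}
    (hbound : ∀ φ Dφ, IsC1b φ Dφ → |∫ x, ⟪Dφ x, v⟫ ∂ν| ≤ C * √(∫ x, φ x ^ 2 ∂ν))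
    (hC1b : ∀ n, IsC1b (φn n) (Dφn n)) (hφ0 : Tendsto (fun n => eLpNorm (φn n) 2 ν) atTop (𝓝 0))
    {f : H → ℝ} (hf : Integrable f ν)
    (hconv : Tendsto (fun n => eLpNorm (fun x => c * ⟪Dφn n x, v⟫ - f x) 2 ν) atTop (𝓝 0))
    (hψ : IsC1b ψ Dψ) : ∫ x, ψ x * f x ∂ν = 0 :=
  tendsto_nhds_unique (tendsto_integral_mul_inner_grad_of_tendsto hC1b hf hconv hψ) <| by
    simpa using (tendsto_integral_mul_inner_grad_zero hbound hC1b hφ0 hψ).const_mul c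

end Closability

theorem HilbertBasis.inner_tsum_mul_inner_smul {ι H : Type*} [NormedAddCommGroup H]
    [InnerProductSpace ℝ H] (b : HilbertBasis ι ℝ H) {lam : ι → ℝ} {M : ℝ}
    (hM : ∀ k, |lam k| ≤ M) (y : H) (k : ι) :
    ⟪∑' j, (lam j * ⟪y, b j⟫) • b j, b k⟫ = lam k * ⟪y, b k⟫ := by
  have hmem : Memℓp (fun j => lam j * ⟪y, b j⟫) 2 := by
    refine ((lp.memℓp (b.repr y)).const_mul M).mono' fun j => ?_
    rw [norm_mul, norm_mul, b.repr_apply_apply, real_inner_comm, Real.norm_eq_abs (lam j)]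
    exact mul_le_mul_of_nonneg_right ((hM j).trans (le_abs_self M)) (norm_nonneg _)
  rw [(b.hasSum_repr_symm ⟨_, hmem⟩).tsum_eq, real_inner_comm, ← b.repr_apply_apply,
    LinearIsometryEquiv.apply_symm_apply]

theorem closability_weighted_gradient_general
    {H : Type*} [NormedAddCommGroup H] [InnerProductSpace ℝ H] [CompleteSpace H]
    [SecondCountableTopology H] [MeasurableSpace H] [BorelSpace H]
    (e : ℕ → H) (he : Orthonormal ℝ e)
    (he_span : (Submodule.span ℝ (Set.range e)).topologicalClosure = ⊤)
    (ν : Measure H) [IsProbabilityMeasure ν]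
    (lam : ℕ → ℝ) (hlam_pos : ∀ k, 0 < lam k) (hlam_bdd : ∃ M : ℝ, ∀ k, lam k ≤ M)
    (Ck : ℕ → ℝ)
    (hbound : ∀ (k : ℕ) (φ : H → ℝ) (Dφ : H → H), IsC1b φ Dφ →
      |∫ x, ⟪Dφ x, e k⟫ ∂ν| ≤ Ck k * Real.sqrt (∫ x, φ x ^ 2 ∂ν))
    (φn : ℕ → H → ℝ) (Dφn : ℕ → H → H) (hC1b : ∀ n, IsC1b (φn n) (Dφn n))
    (F : H → H) (hF : MemLp F 2 ν)
    (hφ0 : Tendsto (fun n => eLpNorm (φn n) 2 ν) atTop (𝓝 0))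
    (hconv : Tendsto
      (fun n => eLpNorm
        (fun x => (∑' k, (lam k * ⟪Dφn n x, e k⟫) • e k) - F x) 2 ν)
      atTop (𝓝 0)) :
    F =ᵐ[ν] 0 := by
  obtain ⟨M, hM⟩ := hlam_bdd
  have hlam : ∀ k, |lam k| ≤ M := fun k => (abs_of_pos (hlam_pos k)).trans_le (hM k)
  let b := HilbertBasis.mk he he_span.ge
  have hb : ⇑b = e := HilbertBasis.coe_mk _ _
  have hFk : ∀ k, Integrable (fun x => ⟪F x, e k⟫) ν := fun k =>
    (hF.integrable one_le_two).inner_const (e k)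
  have hG : ∀ n x k, ⟪∑' j, (lam j * ⟪Dφn n x, e j⟫) • e j, e k⟫ = lam k * ⟪Dφn n x, e k⟫ :=
    fun n x k => hb ▸ b.inner_tsum_mul_inner_smul hlam (Dφn n x) k
  have hconv_k : ∀ k, Tendsto (fun n => eLpNorm (fun x => lam k * ⟪Dφn n x, e k⟫ - ⟪F x, e k⟫)
      2 ν) atTop (𝓝 0) := fun k => tendsto_eLpNorm_zero_of_norm_le_mul (c := 1) (fun n x => by
    rw [← hG, ← inner_sub_left, one_mul]
    exact (norm_inner_le_norm _ _).trans_eq (by rw [he.1 k, mul_one])) hconv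
  have hcoord : ∀ k, (fun x => ⟪F x, e k⟫) =ᵐ[ν] 0 := fun k =>
    ae_eq_zero_of_forall_isC1b_integral_mul_eq_zero (hFk k) fun _ _ hψ =>
      integral_mul_eq_zero_of_tendsto (hbound k) hC1b hφ0 (hFk k) (hconv_k k) hψ
  filter_upwards [ae_all_iff.2 hcoord] with x hx
  rw [Pi.zero_apply, ← inner_self_eq_zero (𝕜 := ℝ), ← b.tsum_inner_mul_inner]
  simp [hb, hx]

/-- **Abstract form of Corollary 2.2 of the paper: closability of the weighted
gradient.** Let `(e_k)` be an orthonormal basis of `H`, `λ` a bounded positive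
sequence, and suppose `|∫ ⟨Dφ, e_k⟩ dν| ≤ C_k ‖φ‖_{L²(ν)}` for every `k` and
every `φ ∈ C¹_b(H)`. If `φ_n ∈ C¹_b(H)`, `φ_n → 0` in `L²(ν)` and
`G_n = ∑_k λ_k ⟨Dφ_n(·), e_k⟩ e_k → F` in `L²(ν; H)`, then `F = 0` ν-a.e. -/
theorem closability_weighted_gradient
    {H : Type*} [NormedAddCommGroup H] [InnerProductSpace ℝ H] [CompleteSpace H]
    [SecondCountableTopology H] [MeasurableSpace H] [BorelSpace H]
    (e : ℕ → H) (he : Orthonormal ℝ e)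
    (he_span : (Submodule.span ℝ (Set.range e)).topologicalClosure = ⊤)
    (ν : Measure H) [IsProbabilityMeasure ν]
    (lam : ℕ → ℝ) (hlam_pos : ∀ k, 0 < lam k) (hlam_bdd : ∃ M : ℝ, ∀ k, lam k ≤ M)
    (Ck : ℕ → ℝ) (hCk : ∀ k, 0 ≤ Ck k)
    (hbound : ∀ (k : ℕ) (φ : H → ℝ) (Dφ : H → H), IsC1b φ Dφ →
      |∫ x, ⟪Dφ x, e k⟫ ∂ν| ≤ Ck k * Real.sqrt (∫ x, φ x ^ 2 ∂ν))
    (φn : ℕ → H → ℝ) (Dφn : ℕ → H → H) (hC1b : ∀ n, IsC1b (φn n) (Dφn n))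
    (F : H → H) (hF : MemLp F 2 ν)
    (hφ0 : Tendsto (fun n => eLpNorm (φn n) 2 ν) atTop (𝓝 0))
    (hconv : Tendsto
      (fun n => eLpNorm
        (fun x => (∑' k, (lam k * ⟪Dφn n x, e k⟫) • e k) - F x) 2 ν)
      atTop (𝓝 0)) :
    F =ᵐ[ν] 0 :=
  closability_weighted_gradient_general e he he_span ν lam hlam_pos hlam_bdd Ck hbound φn Dφn hC1b F
    hF hφ0 hconv
end

section
/- (Density of trigonometric cylindrical functions.) Let H be a real separable Hilbert space and let ν be a finite Borel measure on H. Then the real linear span of the functions x ↦ cos⟨h, x⟩ and x ↦ sin⟨h, x⟩, for h ranging over H, is dense in L²(H,ν). -/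
open MeasureTheory
open scoped RealInnerProductSpace BoundedContinuousFunction

/-!
If `u ∈ L²(ν)` is orthogonal to every `cos ⟪h, ·⟫` and `sin ⟪h, ·⟫`, then `u` is `ν`-integrable
and the finite measures `u⁺ ν` and `u⁻ ν` have the same characteristic function. Characteristic
functions determine finite measures on a separable Hilbert space, so `u⁺ = u⁻` a.e., i.e. `u = 0`.
Hence the span has trivial orthogonal complement in `L²(ν)` and is dense.
-/

section FourierUniqueness

variable {E : Type*} [NormedAddCommGroup E] [InnerProductSpace ℝ E] [MeasurableSpace E]
  {μ : Measure E} {f : E → ℝ}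

lemma integral_smul_exp_inner_mul_I [OpensMeasurableSpace E] (hf : Integrable f μ) (t : E) :
    ∫ x, f x • Complex.exp (⟪x, t⟫ * Complex.I) ∂μ =
      ↑(∫ x, Real.cos ⟪t, x⟫ * f x ∂μ) + ↑(∫ x, Real.sin ⟪t, x⟫ * f x ∂μ) * Complex.I := by
  have hcos : Integrable (fun x => Real.cos ⟪t, x⟫ * f x) μ :=
    hf.bdd_mul (c := 1) (by fun_prop) (ae_of_all _ fun x => by simpa using Real.abs_cos_le_one _)
  have hsin : Integrable (fun x => Real.sin ⟪t, x⟫ * f x) μ :=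
    hf.bdd_mul (c := 1) (by fun_prop) (ae_of_all _ fun x => by simpa using Real.abs_sin_le_one _)
  rw [← integral_complex_ofReal, ← integral_complex_ofReal, ← integral_mul_const,
    ← integral_add hcos.ofReal (hsin.ofReal.mul_const _)]
  congr 1 with x
  rw [Complex.exp_mul_I, real_inner_comm, Complex.real_smul]
  push_cast
  ring

variable [CompleteSpace E] [SecondCountableTopology E] [BorelSpace E]

theorem ae_eq_zero_of_forall_integral_smul_exp_eq_zero (hf : Integrable f μ)
    (h : ∀ t, ∫ x, f x • Complex.exp (⟪x, t⟫ * Complex.I) ∂μ = 0) : f =ᵐ[μ] 0 := by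
  have hpos : AEMeasurable (fun x => ENNReal.ofReal (f x)) μ := hf.1.aemeasurable.ennreal_ofReal
  have hneg : AEMeasurable (fun x => ENNReal.ofReal (-f x)) μ :=
    hf.1.aemeasurable.neg.ennreal_ofReal
  have := isFiniteMeasure_withDensity_ofReal hf.2
  have := isFiniteMeasure_withDensity_ofReal hf.neg.2
  have hchar : charFun (μ.withDensity fun x => ENNReal.ofReal (f x)) =
      charFun (μ.withDensity fun x => ENNReal.ofReal (-f x)) := by
    ext t
    have hexp : ∀ᵐ x ∂μ, ‖Complex.exp (⟪x, t⟫ * Complex.I)‖ ≤ 1 :=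
      ae_of_all _ fun x => (Complex.norm_exp_ofReal_mul_I _).le
    have hexp_meas : AEStronglyMeasurable (fun x => Complex.exp (⟪x, t⟫ * Complex.I)) μ := by
      fun_prop
    rw [charFun_apply, charFun_apply, ← sub_eq_zero,
      integral_withDensity_eq_integral_toReal_smul₀ hpos (by simp),
      integral_withDensity_eq_integral_toReal_smul₀ hneg (by simp)]
    simp only [ENNReal.toReal_ofReal']
    rw [← integral_sub, ← h t]
    · simp only [← sub_smul, max_zero_sub_max_neg_zero_eq_self]
    · exact hf.pos_part.smul_bdd 1 hexp_meas hexp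
    · exact hf.neg.pos_part.smul_bdd 1 hexp_meas hexp
  have hae := (withDensity_eq_iff hpos hneg
    ((lintegral_mono fun x => Real.ofReal_le_enorm (f x)).trans_lt hf.2).ne).1
    (Measure.ext_of_charFun hchar)
  filter_upwards [hae] with x hx
  rcases le_total (f x) 0 with hx0 | hx0
  · rw [ENNReal.ofReal_of_nonpos hx0, eq_comm, ENNReal.ofReal_eq_zero] at hx
    exact le_antisymm hx0 (by simpa using hx)
  · rw [ENNReal.ofReal_of_nonpos (neg_nonpos.2 hx0), ENNReal.ofReal_eq_zero] at hx
    exact le_antisymm hx hx0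

end FourierUniqueness

section ToLp

variable {α : Type*} [TopologicalSpace α] [MeasurableSpace α] [BorelSpace α]
  {μ : Measure α} [IsFiniteMeasure μ]

lemma BoundedContinuousFunction.inner_toLp_eq_integral (φ : α →ᵇ ℝ) (u : Lp ℝ 2 μ) :
    ⟪BoundedContinuousFunction.toLp 2 μ ℝ φ, u⟫ = ∫ x, φ x * u x ∂μ := by
  rw [L2.inner_def]
  refine integral_congr_ae ?_
  filter_upwards [BoundedContinuousFunction.coeFn_toLp 2 μ ℝ φ] with x hx
  rw [hx, Real.inner_apply]

lemma exists_eLpNorm_sub_lt_of_dense_image_toLp {E : Type*} [NormedAddCommGroup E]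
    [NormedSpace ℝ E] {p : ENNReal} [Fact (1 ≤ p)]
    [SecondCountableTopologyEither α E] {S : Set (α →ᵇ E)}
    (hS : Dense (BoundedContinuousFunction.toLp (E := E) p μ ℝ '' S))
    {g : α → E} (hg : MemLp g p μ) {ε : ℝ} (hε : 0 < ε) :
    ∃ φ ∈ S, eLpNorm (fun x => g x - φ x) p μ < ENNReal.ofReal ε := by
  obtain ⟨_, hdist, φ, hφ, rfl⟩ := Metric.dense_iff.1 hS (hg.toLp g) ε hε
  refine ⟨φ, hφ, ?_⟩
  rw [Metric.mem_ball', ← edist_lt_ofReal, Lp.edist_def] at hdist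
  refine lt_of_eq_of_lt (eLpNorm_congr_ae ?_) hdist
  filter_upwards [hg.coeFn_toLp, BoundedContinuousFunction.coeFn_toLp p μ ℝ φ] with x hgx hφx
  rw [Pi.sub_apply, hgx, hφx]

end ToLp

section Trigonometric

variable {H : Type*} [NormedAddCommGroup H] [InnerProductSpace ℝ H]

noncomputable def cosInner (h : H) : H →ᵇ ℝ :=
  .ofNormedAddCommGroup (fun x => Real.cos ⟪h, x⟫) (by fun_prop) 1 fun _ => Real.abs_cos_le_one _

noncomputable def sinInner (h : H) : H →ᵇ ℝ :=
  .ofNormedAddCommGroup (fun x => Real.sin ⟪h, x⟫) (by fun_prop) 1 fun _ => Real.abs_sin_le_one _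

@[simp]
lemma cosInner_apply (h x : H) : cosInner h x = Real.cos ⟪h, x⟫ := rfl

@[simp]
lemma sinInner_apply (h x : H) : sinInner h x = Real.sin ⟪h, x⟫ := rfl

variable (H) in
def trigSpan : Submodule ℝ (H →ᵇ ℝ) :=
  Submodule.span ℝ (Set.range cosInner ∪ Set.range sinInner)

lemma coe_mem_span_of_mem_trigSpan {φ : H →ᵇ ℝ} (hφ : φ ∈ trigSpan H) :
    ⇑φ ∈ Submodule.span ℝ
      ({ψ : H → ℝ | ∃ h : H, ψ = fun x => Real.cos ⟪h, x⟫} ∪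
        {ψ : H → ℝ | ∃ h : H, ψ = fun x => Real.sin ⟪h, x⟫}) := by
  let coeFn : (H →ᵇ ℝ) →ₗ[ℝ] H → ℝ :=
    (ContinuousMap.coeFnLinearMap ℝ).comp
      (BoundedContinuousFunction.toContinuousMapLinearMap H ℝ ℝ)
  refine Submodule.span_mono ?_ (Submodule.apply_mem_span_image_of_mem_span coeFn hφ)
  rintro _ ⟨_, ⟨h, rfl⟩ | ⟨h, rfl⟩, rfl⟩
  exacts [Or.inl ⟨h, rfl⟩, Or.inr ⟨h, rfl⟩]

variable [CompleteSpace H] [SecondCountableTopology H] [MeasurableSpace H] [BorelSpace H]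
  {ν : Measure H} [IsFiniteMeasure ν]

lemma eq_zero_of_forall_inner_toLp_cosInner_sinInner {u : Lp ℝ 2 ν}
    (hcos : ∀ h, ⟪BoundedContinuousFunction.toLp 2 ν ℝ (cosInner h), u⟫ = 0)
    (hsin : ∀ h, ⟪BoundedContinuousFunction.toLp 2 ν ℝ (sinInner h), u⟫ = 0) : u = 0 := by
  have hu : Integrable u ν := (Lp.memLp u).integrable one_le_two
  rw [Lp.eq_zero_iff_ae_eq_zero]
  refine ae_eq_zero_of_forall_integral_smul_exp_eq_zero hu fun t => ?_
  rw [integral_smul_exp_inner_mul_I hu]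
  simp only [BoundedContinuousFunction.inner_toLp_eq_integral, cosInner_apply, sinInner_apply]
    at hcos hsin
  simp [hcos, hsin]

lemma dense_image_toLp_trigSpan :
    Dense (BoundedContinuousFunction.toLp (E := ℝ) 2 ν ℝ '' trigSpan H) := by
  let toLp : (H →ᵇ ℝ) →ₗ[ℝ] Lp ℝ 2 ν := (BoundedContinuousFunction.toLp 2 ν ℝ).toLinearMap
  change Dense ((trigSpan H).map toLp : Set (Lp ℝ 2 ν))
  rw [Submodule.dense_iff_topologicalClosure_eq_top, Submodule.topologicalClosure_eq_top_iff,
    Submodule.eq_bot_iff]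
  intro u hu
  rw [Submodule.mem_orthogonal] at hu
  refine eq_zero_of_forall_inner_toLp_cosInner_sinInner (fun h => ?_) (fun h => ?_)
  · exact hu _ (Submodule.mem_map_of_mem (Submodule.subset_span (Or.inl ⟨h, rfl⟩)))
  · exact hu _ (Submodule.mem_map_of_mem (Submodule.subset_span (Or.inr ⟨h, rfl⟩)))

end Trigonometric

/-- **Density of trigonometric cylindrical functions.** In a real separable
Hilbert space `H` with a finite Borel measure `ν`, the real linear span of the
functions `x ↦ cos ⟨h, x⟩` and `x ↦ sin ⟨h, x⟩`, `h ∈ H`, is dense in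
`L²(H,ν)`: any `g ∈ L²(H,ν)` can be approximated in the `L²(ν)`-norm by
elements of this span. -/
theorem trig_cylindrical_dense
    {H : Type*} [NormedAddCommGroup H] [InnerProductSpace ℝ H] [CompleteSpace H]
    [SecondCountableTopology H] [MeasurableSpace H] [BorelSpace H]
    (ν : Measure H) [IsFiniteMeasure ν]
    (g : H → ℝ) (hg : MemLp g 2 ν) :
    ∀ ε : ℝ, 0 < ε →
      ∃ φ ∈ Submodule.span ℝ
          ({ψ : H → ℝ | ∃ h : H, ψ = fun x => Real.cos ⟪h, x⟫} ∪
           {ψ : H → ℝ | ∃ h : H, ψ = fun x => Real.sin ⟪h, x⟫}),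
        eLpNorm (fun x => g x - φ x) 2 ν < ENNReal.ofReal ε := by
  intro ε hε
  obtain ⟨φ, hφ, hlt⟩ := exists_eLpNorm_sub_lt_of_dense_image_toLp dense_image_toLp_trigSpan hg hε
  exact ⟨φ, coe_mem_span_of_mem_trigSpan hφ, hlt⟩
end
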